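/- Let a, r, R, L be positive real numbers satisfying (3/2)a + (9/4)r²R + (3/2)a r² R² + (3/2)(r² + (3/2)r⁴)R³ ≤ R and r²((9/4) + (9/2)R² + 3aR² + (27/4)R²r²) ≤ L < 1. Then there exists a unique function h ∈ C²₀([0,r]) with ‖h''‖_{C⁰([0,r])} ≤ R that solves the shifted Cauchy problem: h''(x) = (1 + h'(x)²)[h'(x)(x - 1/x) - h(x) - a] for x ∈ (0,r]. -/

import Mathlib

open Set

/-- First derivative within `[0, r]`. -/
noncomputable def d1 (r : ℝ) (f : ℝ → ℝ) : ℝ → ℝ := derivWithin f (Icc 0 r)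

/-- Second derivative within `[0, r]`. -/
noncomputable def d2 (r : ℝ) (f : ℝ → ℝ) : ℝ → ℝ := derivWithin (d1 r f) (Icc 0 r)

/-- `h ∈ C²₀([0,r])` solves the shifted Cauchy problem
`h''(x) = (1 + h'(x)²)[h'(x)(x - 1/x) - h(x) - a]` for `x ∈ (0, r]`,
with `h(0) = h'(0) = 0`. -/
def ShiftedCP (a r : ℝ) (h : ℝ → ℝ) : Prop :=
  ContDiffOn ℝ 2 h (Icc 0 r) ∧ h 0 = 0 ∧ d1 r h 0 = 0 ∧
  ∀ x ∈ Ioc (0:ℝ) r,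
    d2 r h x = (1 + (d1 r h x) ^ 2) * (d1 r h x * (x - 1 / x) - h x - a)

/-!
Write `w = h''`, `P = h' = ∫₀ˣ w` (`prim w`) and `Q = h` (`prim (prim w)`). Since
`P³/x = P² m` with `m x = ∫₀¹ w (s x) ds` (`mean w`), the right-hand side of the equation
is `G - P/x`, where `G = (1 + P²)(P x - Q - a) - P² m` (`source a w`) is controlled by the
size of `w` alone. So the equation reads `w + P/x = G`, i.e. `(x P)' = x G`, and with
`P(0) = 0` it is equivalent to the fixed-point equation
`w = G - x⁻² ∫₀ˣ t G(t) dt = G(x) - ∫₀¹ s G(s x) ds` (`cauchyMap a w`).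
The smallness conditions make this map send the ball of radius `R` in `C([0, r])` into
itself and be `L`-Lipschitz there; Banach's fixed point theorem gives a unique `w`, and
`h = Q` is then the unique solution.
-/

open Filter Topology intervalIntegral Function

theorem abs_intervalIntegral_le_of_abs_le_mul_pow {f : ℝ → ℝ} {C x : ℝ} (n : ℕ) (hx : 0 ≤ x)
    (hf : ∀ t ∈ Ioc 0 x, |f t| ≤ C * t ^ n) :
    |∫ t in (0:ℝ)..x, f t| ≤ C * x ^ (n + 1) / (n + 1) := by
  have h := norm_integral_le_of_norm_le (μ := MeasureTheory.volume) (g := fun t => C * t ^ n) hx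
    (Eventually.of_forall fun t ht => (Real.norm_eq_abs _).trans_le (hf t ht))
    ((continuous_const.mul (continuous_pow n)).intervalIntegrable 0 x)
  simpa [integral_pow, mul_div_assoc] using h

theorem intervalIntegral_unit_comp_mul {g : ℝ → ℝ} {x : ℝ} (hx : x ≠ 0) :
    ∫ s in (0:ℝ)..1, g (s * x) = (∫ t in (0:ℝ)..x, g t) / x := by
  rw [integral_comp_mul_right g hx, zero_mul, one_mul, smul_eq_mul, inv_mul_eq_div]

theorem intervalIntegral_unit_mul_comp_mul {g : ℝ → ℝ} {x : ℝ} (hx : x ≠ 0) :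
    ∫ s in (0:ℝ)..1, s * g (s * x) = (∫ t in (0:ℝ)..x, t * g t) / x ^ 2 := by
  have h : ∀ s, s * g (s * x) = x⁻¹ * ((s * x) * g (s * x)) := fun s => by
    rw [← mul_assoc, mul_comm x⁻¹, mul_assoc s, mul_inv_cancel₀ hx, mul_one]
  simp_rw [h]
  rw [integral_const_mul, intervalIntegral_unit_comp_mul (g := fun t => t * g t) hx]
  field_simp

theorem integral_derivWithin_Icc_eq_sub {f : ℝ → ℝ} {a b x : ℝ} (hab : a < b)
    (hf : ContDiffOn ℝ 1 f (Icc a b)) (hx : x ∈ Icc a b) :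
    ∫ t in a..x, derivWithin f (Icc a b) t = f x - f a := by
  have hsub : Icc a x ⊆ Icc a b := Icc_subset_Icc le_rfl hx.2
  refine integral_eq_sub_of_hasDeriv_right_of_le hx.1 (hf.continuousOn.mono hsub)
    (fun t ht => ?_) ?_
  · have ht' : t ∈ Ico a b := ⟨ht.1.le, ht.2.trans_le hx.2⟩
    exact ((hf.differentiableOn one_ne_zero t (Ico_subset_Icc_self ht')).hasDerivWithinAt
      ).mono_of_mem_nhdsWithin (Icc_mem_nhdsGT_of_mem ht')
  · rw [intervalIntegrable_iff_integrableOn_Icc_of_le hx.1]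
    exact ((hf.continuousOn_derivWithin (uniqueDiffOn_Icc hab) le_rfl).mono hsub).integrableOn_Icc

theorem eqOn_zero_of_hasDerivAt_zero {F : ℝ → ℝ} {r : ℝ}
    (hF : ∀ x ∈ Ioc 0 r, HasDerivAt F 0 x) (hlim : Tendsto F (𝓝[>] 0) (𝓝 0)) :
    EqOn F 0 (Ioc 0 r) := by
  intro x hx
  have hconst : ∀ y ∈ Ioc 0 x, F x = F y := fun y hy =>
    constant_of_has_deriv_right_zero
      (fun t ht => (hF t ⟨hy.1.trans_le ht.1, ht.2.trans hx.2⟩).continuousAt.continuousWithinAt)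
      (fun t ht => (hF t ⟨hy.1.trans_le ht.1, ht.2.le.trans hx.2⟩).hasDerivWithinAt)
      x ⟨hy.2, le_rfl⟩
  have hev : (fun _ => F x) =ᶠ[𝓝[>] 0] F := eventually_of_mem (Ioc_mem_nhdsGT hx.1) hconst
  exact tendsto_nhds_unique (tendsto_const_nhds.congr' hev) hlim

theorem existsUnique_isFixedPt_of_lipschitzOnWith {α : Type*} [MetricSpace α] [CompleteSpace α]
    {f : α → α} {s : Set α} {K : NNReal} (hK : K < 1) (hs : IsClosed s) (hne : s.Nonempty)
    (hsf : MapsTo f s s) (hf : LipschitzOnWith K f s) : ∃! x, x ∈ s ∧ IsFixedPt f x := by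
  have hcontr : ContractingWith K (hsf.restrict f s s) := ⟨hK, fun x y => hf x.2 y.2⟩
  obtain ⟨x₀, hx₀⟩ := hne
  obtain ⟨x, hxs, hfx, -⟩ := hcontr.exists_fixedPoint' hs.isComplete hsf hx₀ (edist_ne_top _ _)
  refine ⟨x, ⟨hxs, hfx⟩, fun y ⟨hys, hfy⟩ => ?_⟩
  exact congrArg Subtype.val (hcontr.fixedPoint_unique' (x := ⟨y, hys⟩) (y := ⟨x, hxs⟩)
    (Subtype.ext hfy) (Subtype.ext hfx))

namespace ShiftedCauchy

section Formula

variable {a x r R D p q m p' q' m' : ℝ}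

def sourceFormula (a x p q m : ℝ) : ℝ := (1 + p ^ 2) * (p * x - q - a) - p ^ 2 * m

theorem abs_mul_sub_sub_le (ha : 0 ≤ a) (hx : 0 ≤ x) (hp : |p| ≤ R * x)
    (hq : |q| ≤ R * x ^ 2 / 2) : |p * x - q - a| ≤ 3 / 2 * R * x ^ 2 + a :=
  calc |p * x - q - a| ≤ |p * x| + |q| + |a| := by
        refine (abs_sub _ _).trans ?_
        gcongr
        exact abs_sub _ _
    _ = |p| * x + |q| + a := by rw [abs_mul, abs_of_nonneg hx, abs_of_nonneg ha]
    _ ≤ R * x * x + R * x ^ 2 / 2 + a := by gcongr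
    _ = 3 / 2 * R * x ^ 2 + a := by ring

theorem abs_sourceFormula_le (ha : 0 ≤ a) (hx : 0 ≤ x) (hxr : x ≤ r) (hp : |p| ≤ R * x)
    (hq : |q| ≤ R * x ^ 2 / 2) (hm : |m| ≤ R) :
    |sourceFormula a x p q m| ≤ (1 + (R * r) ^ 2) * (3 / 2 * R * r ^ 2 + a) + (R * r) ^ 2 * R := by
  have hR : 0 ≤ R := (abs_nonneg m).trans hm
  have hp2 : p ^ 2 ≤ (R * x) ^ 2 := sq_le_sq' (neg_le_of_abs_le hp) (le_of_abs_le hp)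
  calc |sourceFormula a x p q m|
      ≤ (1 + p ^ 2) * |p * x - q - a| + p ^ 2 * |m| := by
        refine (abs_sub _ _).trans_eq ?_
        rw [abs_mul, abs_mul, abs_of_pos (by positivity), abs_sq]
    _ ≤ (1 + (R * x) ^ 2) * (3 / 2 * R * x ^ 2 + a) + (R * x) ^ 2 * R := by
        gcongr
        exact abs_mul_sub_sub_le ha hx hp hq
    _ ≤ (1 + (R * r) ^ 2) * (3 / 2 * R * r ^ 2 + a) + (R * r) ^ 2 * R := by gcongr

theorem abs_sourceFormula_sub_le (ha : 0 ≤ a) (hx : 0 ≤ x) (hxr : x ≤ r)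
    (hp : |p| ≤ R * x) (hp' : |p'| ≤ R * x) (hq : |q| ≤ R * x ^ 2 / 2) (hm : |m| ≤ R)
    (hpd : |p - p'| ≤ D * x) (hqd : |q - q'| ≤ D * x ^ 2 / 2) (hmd : |m - m'| ≤ D) :
    |sourceFormula a x p q m - sourceFormula a x p' q' m'|
      ≤ D * x ^ 2 * (3 / 2 + 3 * R ^ 2 + 2 * a * R + 9 / 2 * R ^ 2 * r ^ 2) := by
  have hR : 0 ≤ R := (abs_nonneg m).trans hm
  have hD : 0 ≤ D := (abs_nonneg _).trans hmd
  have hp2 : p' ^ 2 ≤ (R * x) ^ 2 := sq_le_sq' (neg_le_of_abs_le hp') (le_of_abs_le hp')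
  have hsq : |p ^ 2 - p' ^ 2| ≤ 2 * (R * x) * (D * x) := by
    rw [sq_sub_sq, abs_mul, two_mul]
    gcongr
    exact (abs_add_le p p').trans (add_le_add hp hp')
  have hlin : |(p - p') * x - (q - q')| ≤ 3 / 2 * D * x ^ 2 :=
    calc |(p - p') * x - (q - q')| ≤ |p - p'| * x + |q - q'| :=
          (abs_sub _ _).trans_eq (by rw [abs_mul, abs_of_nonneg hx])
      _ ≤ D * x * x + D * x ^ 2 / 2 := by gcongr
      _ = 3 / 2 * D * x ^ 2 := by ring
  have e : sourceFormula a x p q m - sourceFormula a x p' q' m'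
      = (p ^ 2 - p' ^ 2) * (p * x - q - a) + (1 + p' ^ 2) * ((p - p') * x - (q - q'))
        - ((p ^ 2 - p' ^ 2) * m + p' ^ 2 * (m - m')) := by
    unfold sourceFormula; ring
  calc |sourceFormula a x p q m - sourceFormula a x p' q' m'|
      ≤ |p ^ 2 - p' ^ 2| * |p * x - q - a| + (1 + p' ^ 2) * |(p - p') * x - (q - q')|
        + (|p ^ 2 - p' ^ 2| * |m| + p' ^ 2 * |m - m'|) := by
        rw [e]
        refine (abs_sub _ _).trans (add_le_add ((abs_add_le _ _).trans_eq ?_)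
          ((abs_add_le _ _).trans_eq ?_))
        · rw [abs_mul, abs_mul, abs_of_pos (show 0 < 1 + p' ^ 2 by positivity)]
        · rw [abs_mul, abs_mul, abs_sq]
    _ ≤ 2 * (R * x) * (D * x) * (3 / 2 * R * x ^ 2 + a) + (1 + (R * x) ^ 2) * (3 / 2 * D * x ^ 2)
        + (2 * (R * x) * (D * x) * R + (R * x) ^ 2 * D) := by
        gcongr
        exact abs_mul_sub_sub_le ha hx hp hq
    _ = D * x ^ 2 * (3 / 2 + 3 * R ^ 2 + 2 * a * R + 9 / 2 * R ^ 2 * x ^ 2) := by ring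
    _ ≤ D * x ^ 2 * (3 / 2 + 3 * R ^ 2 + 2 * a * R + 9 / 2 * R ^ 2 * r ^ 2) := by gcongr

end Formula

variable {w w' g : ℝ → ℝ} {a r x C R D : ℝ}

noncomputable def prim (w : ℝ → ℝ) (x : ℝ) : ℝ := ∫ t in (0:ℝ)..x, w t

noncomputable def mean (w : ℝ → ℝ) (x : ℝ) : ℝ := ∫ s in (0:ℝ)..1, w (s * x)

@[simp] theorem prim_zero : prim w 0 = 0 := integral_same

theorem hasDerivAt_prim (hw : Continuous w) (x : ℝ) : HasDerivAt (prim w) (w x) x :=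
  hw.integral_hasStrictDerivAt 0 x |>.hasDerivAt

theorem continuous_prim (hw : Continuous w) : Continuous (prim w) :=
  continuous_iff_continuousAt.2 fun x => (hasDerivAt_prim hw x).continuousAt

theorem deriv_prim (hw : Continuous w) : deriv (prim w) = w :=
  funext fun x => (hasDerivAt_prim hw x).deriv

theorem contDiff_prim {n : ℕ} (hw : ContDiff ℝ n w) : ContDiff ℝ (n + 1 : ℕ) (prim w) := by
  rw [Nat.cast_add_one, contDiff_succ_iff_deriv, deriv_prim hw.continuous]
  exact ⟨fun x => (hasDerivAt_prim hw.continuous x).differentiableAt,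
    fun h => absurd h (by simp), hw⟩

theorem continuous_mean (hw : Continuous w) : Continuous (mean w) :=
  continuous_parametric_intervalIntegral_of_continuous' (by fun_prop) 0 1

theorem mean_eq_prim_div (hx : x ≠ 0) : mean w x = prim w x / x :=
  intervalIntegral_unit_comp_mul hx

theorem prim_sub (hw : Continuous w) (hw' : Continuous w') : prim w - prim w' = prim (w - w') :=
  funext fun _ => (integral_sub (hw.intervalIntegrable _ _) (hw'.intervalIntegrable _ _)).symm

theorem mean_sub (hw : Continuous w) (hw' : Continuous w') : mean w - mean w' = mean (w - w') :=
  funext fun _ => (integral_sub (by apply Continuous.intervalIntegrable; fun_prop)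
    (by apply Continuous.intervalIntegrable; fun_prop)).symm

theorem abs_prim_le (hb : ∀ t, |w t| ≤ C) (hx : 0 ≤ x) : |prim w x| ≤ C * x := by
  simpa [prim, abs_of_nonneg hx] using norm_integral_le_of_norm_le_const (a := 0) (b := x)
    (fun t _ => (Real.norm_eq_abs _).trans_le (hb t))

theorem abs_prim_prim_le (hb : ∀ t, |w t| ≤ C) (hx : 0 ≤ x) :
    |prim (prim w) x| ≤ C * x ^ 2 / 2 := by
  simpa [prim, one_add_one_eq_two] using abs_intervalIntegral_le_of_abs_le_mul_pow 1 hx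
    fun t ht => by simpa [prim] using abs_prim_le hb ht.1.le

theorem abs_mean_le (hb : ∀ t, |w t| ≤ C) : |mean w x| ≤ C := by
  simpa [mean] using norm_integral_le_of_norm_le_const (a := 0) (b := 1)
    (fun t _ => (Real.norm_eq_abs _).trans_le (hb (t * x)))

noncomputable def source (a : ℝ) (w : ℝ → ℝ) (x : ℝ) : ℝ :=
  sourceFormula a x (prim w x) (prim (prim w) x) (mean w x)

theorem continuous_source (hw : Continuous w) : Continuous (source a w) := by
  have := continuous_prim hw
  have := continuous_prim (continuous_prim hw)
  have := continuous_mean hw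
  unfold source sourceFormula
  fun_prop

theorem source_sub_prim_div (hx : x ≠ 0) : source a w x - prim w x / x
    = (1 + prim w x ^ 2) * (prim w x * (x - 1 / x) - prim (prim w) x - a) := by
  rw [source, sourceFormula, mean_eq_prim_div hx]
  field_simp
  ring

theorem abs_source_le (ha : 0 ≤ a) (hb : ∀ t, |w t| ≤ R) (hx : 0 ≤ x) (hxr : x ≤ r) :
    |source a w x| ≤ (1 + (R * r) ^ 2) * (3 / 2 * R * r ^ 2 + a) + (R * r) ^ 2 * R :=
  abs_sourceFormula_le ha hx hxr (abs_prim_le hb hx) (abs_prim_prim_le hb hx) (abs_mean_le hb)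

theorem abs_source_sub_le (ha : 0 ≤ a) (hw : Continuous w) (hw' : Continuous w')
    (hb : ∀ t, |w t| ≤ R) (hb' : ∀ t, |w' t| ≤ R) (hd : ∀ t, |w t - w' t| ≤ D)
    (hx : 0 ≤ x) (hxr : x ≤ r) : |source a w x - source a w' x|
      ≤ D * x ^ 2 * (3 / 2 + 3 * R ^ 2 + 2 * a * R + 9 / 2 * R ^ 2 * r ^ 2) := by
  have hpd := congrFun (prim_sub hw hw') x
  have hqd := congrFun (prim_sub (continuous_prim hw) (continuous_prim hw')) x
  have hmd := congrFun (mean_sub hw hw') x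
  rw [prim_sub hw hw'] at hqd
  simp only [Pi.sub_apply] at hpd hqd hmd
  refine abs_sourceFormula_sub_le ha hx hxr (abs_prim_le hb hx) (abs_prim_le hb' hx)
    (abs_prim_prim_le hb hx) (abs_mean_le hb) ?_ ?_ ?_
  · rw [hpd]; exact abs_prim_le hd hx
  · rw [hqd]; exact abs_prim_prim_le hd hx
  · rw [hmd]; exact abs_mean_le hd

/-- Written with `∫₀¹` rather than as `G - x⁻² ∫₀ˣ t G(t) dt` so that it is continuous at `0`. -/
noncomputable def cauchyMap (a : ℝ) (w : ℝ → ℝ) (x : ℝ) : ℝ :=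
  source a w x - ∫ s in (0:ℝ)..1, s * source a w (s * x)

theorem continuous_cauchyMap (hw : Continuous w) : Continuous (cauchyMap a w) := by
  have := continuous_source (a := a) hw
  have : Continuous fun x => ∫ s in (0:ℝ)..1, s * source a w (s * x) :=
    continuous_parametric_intervalIntegral_of_continuous' (by fun_prop) 0 1
  unfold cauchyMap
  fun_prop

theorem cauchyMap_eq (hx : x ≠ 0) :
    cauchyMap a w x = source a w x - prim (fun t => t * source a w t) x / x ^ 2 := by
  rw [cauchyMap, intervalIntegral_unit_mul_comp_mul hx, prim]

theorem mul_mem_Icc_of_mem_Ioc {s : ℝ} (hs : s ∈ Ioc (0:ℝ) 1) (hx : 0 ≤ x) (hxr : x ≤ r) :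
    s * x ∈ Icc 0 r :=
  ⟨mul_nonneg hs.1.le hx, (mul_le_of_le_one_left hx hs.2).trans hxr⟩

theorem abs_cauchyMap_le (ha : 0 ≤ a) (hb : ∀ t, |w t| ≤ R) (hx : 0 ≤ x) (hxr : x ≤ r) :
    |cauchyMap a w x|
      ≤ 3 / 2 * ((1 + (R * r) ^ 2) * (3 / 2 * R * r ^ 2 + a) + (R * r) ^ 2 * R) := by
  set N := (1 + (R * r) ^ 2) * (3 / 2 * R * r ^ 2 + a) + (R * r) ^ 2 * R
  have hint : |∫ s in (0:ℝ)..1, s * source a w (s * x)| ≤ N / 2 := by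
    refine (abs_intervalIntegral_le_of_abs_le_mul_pow (C := N) 1 zero_le_one
      fun s hs => ?_).trans_eq (by norm_num)
    obtain ⟨hsx, hsxr⟩ := mul_mem_Icc_of_mem_Ioc hs hx hxr
    rw [abs_mul, abs_of_pos hs.1, pow_one, mul_comm N]
    exact mul_le_mul_of_nonneg_left (abs_source_le ha hb hsx hsxr) hs.1.le
  calc |cauchyMap a w x| ≤ N + N / 2 :=
        (abs_sub _ _).trans (add_le_add (abs_source_le ha hb hx hxr) hint)
    _ = 3 / 2 * N := by ring

theorem abs_cauchyMap_sub_le (ha : 0 ≤ a) (hw : Continuous w) (hw' : Continuous w')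
    (hb : ∀ t, |w t| ≤ R) (hb' : ∀ t, |w' t| ≤ R) (hd : ∀ t, |w t - w' t| ≤ D)
    (hx : 0 ≤ x) (hxr : x ≤ r) : |cauchyMap a w x - cauchyMap a w' x|
      ≤ 5 / 4 * r ^ 2 * (3 / 2 + 3 * R ^ 2 + 2 * a * R + 9 / 2 * R ^ 2 * r ^ 2) * D := by
  set M := 3 / 2 + 3 * R ^ 2 + 2 * a * R + 9 / 2 * R ^ 2 * r ^ 2
  have hD : 0 ≤ D := (abs_nonneg _).trans (hd 0)
  have hR : 0 ≤ R := (abs_nonneg _).trans (hb 0)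
  have hint : ∀ {v : ℝ → ℝ}, Continuous v →
      IntervalIntegrable (fun s => s * source a v (s * x)) MeasureTheory.volume 0 1 := fun hv =>
    Continuous.intervalIntegrable
      (continuous_id.mul ((continuous_source hv).comp (continuous_mul_const x))) _ _
  have hdiff : |∫ s in (0:ℝ)..1, (s * source a w (s * x) - s * source a w' (s * x))|
      ≤ D * x ^ 2 * M / 4 := by
    refine (abs_intervalIntegral_le_of_abs_le_mul_pow (C := D * x ^ 2 * M) 3 zero_le_one
      fun s hs => ?_).trans_eq (by norm_num)
    obtain ⟨hsx, hsxr⟩ := mul_mem_Icc_of_mem_Ioc hs hx hxr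
    rw [← mul_sub, abs_mul, abs_of_pos hs.1]
    calc s * |source a w (s * x) - source a w' (s * x)| ≤ s * (D * (s * x) ^ 2 * M) :=
          mul_le_mul_of_nonneg_left (abs_source_sub_le ha hw hw' hb hb' hd hsx hsxr) hs.1.le
      _ = D * x ^ 2 * M * s ^ 3 := by ring
  calc |cauchyMap a w x - cauchyMap a w' x|
      ≤ |source a w x - source a w' x|
        + |∫ s in (0:ℝ)..1, (s * source a w (s * x) - s * source a w' (s * x))| := by
        rw [integral_sub (hint hw) (hint hw')]
        refine le_of_eq_of_le (congrArg abs ?_) (abs_sub _ _)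
        unfold cauchyMap
        ring
    _ ≤ D * x ^ 2 * M + D * x ^ 2 * M / 4 :=
        add_le_add (abs_source_sub_le ha hw hw' hb hb' hd hx hxr) hdiff
    _ = 5 / 4 * x ^ 2 * M * D := by ring
    _ ≤ 5 / 4 * r ^ 2 * M * D := by gcongr

theorem prim_eq_div_of_eq_sub (hw : Continuous w) (hg : Continuous g)
    (h : ∀ x ∈ Ioc 0 r, w x = g x - prim (fun t => t * g t) x / x ^ 2) :
    ∀ x ∈ Ioc 0 r, prim w x = prim (fun t => t * g t) x / x := by
  set J := prim fun t => t * g t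
  have hJ : ∀ x, HasDerivAt J (x * g x) x := hasDerivAt_prim (continuous_id.mul hg)
  have hF : ∀ x ∈ Ioc 0 r, HasDerivAt (fun x => prim w x - J x / x) 0 x := fun x hx => by
    refine ((hasDerivAt_prim hw x).sub ((hJ x).div (hasDerivAt_id x) hx.1.ne')).congr_deriv ?_
    have hx0 : x ≠ 0 := hx.1.ne'
    rw [h x hx, id]
    field_simp
    ring
  -- `J x / x` is the difference quotient of `J` at `0`, where `J' = 0`.
  have hJ0 : Tendsto (fun x => J x / x) (𝓝[>] 0) (𝓝 0) := by
    simpa [J, inv_mul_eq_div] using (hJ 0).tendsto_slope_zero_right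
  have hP0 : Tendsto (prim w) (𝓝[>] 0) (𝓝 0) := by
    simpa using ((continuous_prim hw).tendsto 0).mono_left nhdsWithin_le_nhds
  intro x hx
  exact sub_eq_zero.1 (eqOn_zero_of_hasDerivAt_zero hF (by simpa using hP0.sub hJ0) hx)

theorem mul_prim_eq_of_add_div_eq (hw : Continuous w) (hg : Continuous g)
    (h : ∀ x ∈ Ioc 0 r, w x + prim w x / x = g x) :
    ∀ x ∈ Ioc 0 r, x * prim w x = prim (fun t => t * g t) x := by
  set J := prim fun t => t * g t
  have hJ : ∀ x, HasDerivAt J (x * g x) x := hasDerivAt_prim (continuous_id.mul hg)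
  have hF : ∀ x ∈ Ioc 0 r, HasDerivAt (fun x => x * prim w x - J x) 0 x := fun x hx => by
    refine (((hasDerivAt_id x).mul (hasDerivAt_prim hw x)).sub (hJ x)).congr_deriv ?_
    have hx0 : x ≠ 0 := hx.1.ne'
    rw [← h x hx, id]
    field_simp
    ring
  have hF0 : Tendsto (fun x => x * prim w x - J x) (𝓝[>] 0) (𝓝 0) := by
    have hc : Continuous fun x => x * prim w x - J x :=
      (continuous_id.mul (continuous_prim hw)).sub (continuous_prim (continuous_id.mul hg))
    simpa [J] using (hc.tendsto 0).mono_left nhdsWithin_le_nhds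
  intro x hx
  exact sub_eq_zero.1 (eqOn_zero_of_hasDerivAt_zero hF hF0 hx)

theorem eqOn_prim_of_eqOn_derivWithin {f : ℝ → ℝ} (hr : 0 < r) (hf : ContDiffOn ℝ 1 f (Icc 0 r))
    (hf0 : f 0 = 0) (hw : EqOn w (derivWithin f (Icc 0 r)) (Icc 0 r)) :
    EqOn (prim w) f (Icc 0 r) := fun x hx => by
  rw [prim, integral_congr (hw.mono ?_), integral_derivWithin_Icc_eq_sub hr hf hx, hf0, sub_zero]
  rw [uIcc_of_le hx.1]
  exact Icc_subset_Icc le_rfl hx.2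

theorem d1_prim_prim (hr : 0 < r) (hw : Continuous w) :
    EqOn (d1 r (prim (prim w))) (prim w) (Icc 0 r) := fun x hx =>
  (hasDerivAt_prim (continuous_prim hw) x).hasDerivWithinAt.derivWithin (uniqueDiffOn_Icc hr x hx)

theorem d2_prim_prim (hr : 0 < r) (hw : Continuous w) :
    EqOn (d2 r (prim (prim w))) w (Icc 0 r) := fun x hx => by
  rw [d2, derivWithin_congr (d1_prim_prim hr hw) (d1_prim_prim hr hw hx)]
  exact (hasDerivAt_prim hw x).hasDerivWithinAt.derivWithin (uniqueDiffOn_Icc hr x hx)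

theorem contDiffOn_d1 {f : ℝ → ℝ} (hr : 0 < r) (hf : ContDiffOn ℝ 2 f (Icc 0 r)) :
    ContDiffOn ℝ 1 (d1 r f) (Icc 0 r) :=
  hf.derivWithin (uniqueDiffOn_Icc hr) (by norm_num)

theorem continuousOn_d2 {f : ℝ → ℝ} (hr : 0 < r) (hf : ContDiffOn ℝ 2 f (Icc 0 r)) :
    ContinuousOn (d2 r f) (Icc 0 r) :=
  (contDiffOn_d1 hr hf).continuousOn_derivWithin (uniqueDiffOn_Icc hr) le_rfl

theorem shiftedCP_prim_prim (hr : 0 < r) (hw : Continuous w)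
    (hfix : ∀ x ∈ Icc 0 r, cauchyMap a w x = w x) : ShiftedCP a r (prim (prim w)) := by
  refine ⟨?_, prim_zero, ?_, fun x hx => ?_⟩
  · exact (contDiff_prim (contDiff_prim (n := 0) (contDiff_zero.2 hw))).contDiffOn
  · rw [d1_prim_prim hr hw (left_mem_Icc.2 hr.le), prim_zero]
  have hsol : ∀ x ∈ Ioc 0 r,
      w x = source a w x - prim (fun t => t * source a w t) x / x ^ 2 := fun x hx => by
    rw [← hfix x (Ioc_subset_Icc_self hx), cauchyMap_eq hx.1.ne']
  have hxI := Ioc_subset_Icc_self hx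
  rw [d2_prim_prim hr hw hxI, d1_prim_prim hr hw hxI, ← source_sub_prim_div hx.1.ne', hsol x hx,
    prim_eq_div_of_eq_sub hw (continuous_source hw) hsol x hx, div_div, sq]

theorem eqOn_prim_of_shiftedCP {f : ℝ → ℝ} (hr : 0 < r) (hf : ShiftedCP a r f)
    (hwf : EqOn w (d2 r f) (Icc 0 r)) :
    EqOn (prim w) (d1 r f) (Icc 0 r) ∧ EqOn (prim (prim w)) f (Icc 0 r) := by
  have hP := eqOn_prim_of_eqOn_derivWithin hr (contDiffOn_d1 hr hf.1) hf.2.2.1 hwf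
  exact ⟨hP, eqOn_prim_of_eqOn_derivWithin hr (hf.1.of_le one_le_two) hf.2.1 hP⟩

theorem cauchyMap_eqOn_of_shiftedCP {f : ℝ → ℝ} (hr : 0 < r) (hf : ShiftedCP a r f)
    (hw : Continuous w) (hwf : EqOn w (d2 r f) (Icc 0 r)) :
    EqOn (cauchyMap a w) w (Icc 0 r) := by
  obtain ⟨hP, hQ⟩ := eqOn_prim_of_shiftedCP hr hf hwf
  have hode : ∀ x ∈ Ioc 0 r, w x + prim w x / x = source a w x := fun x hx => by
    have hxI := Ioc_subset_Icc_self hx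
    rw [hwf hxI, hf.2.2.2 x hx, ← hP hxI, ← hQ hxI, ← source_sub_prim_div hx.1.ne',
      sub_add_cancel]
  have hJ := mul_prim_eq_of_add_div_eq hw (continuous_source hw) hode
  refine EqOn.of_subset_closure (fun x hx => ?_) (continuous_cauchyMap hw).continuousOn
    hw.continuousOn Ioc_subset_Icc_self (closure_Ioc hr.ne).ge
  have hx0 : x ≠ 0 := hx.1.ne'
  rw [cauchyMap_eq hx0, ← hJ x hx, ← hode x hx]
  field_simp
  ring

section ContinuousFunctions

variable (hr : 0 ≤ r)

theorem abs_IccExtend_le (u : C(Icc 0 r, ℝ)) (t : ℝ) :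
    |ContinuousMap.IccExtend hr u t| ≤ ‖u‖ :=
  u.norm_coe_le_norm _

theorem abs_IccExtend_sub_le (u v : C(Icc 0 r, ℝ)) (t : ℝ) :
    |ContinuousMap.IccExtend hr u t - ContinuousMap.IccExtend hr v t| ≤ dist u v := by
  simpa [Set.IccExtend, dist_eq_norm] using (u - v).norm_coe_le_norm (projIcc 0 r hr t)

noncomputable def cauchyMapC (a : ℝ) (u : C(Icc 0 r, ℝ)) : C(Icc 0 r, ℝ) :=
  ContinuousMap.restrict (Icc 0 r)
    ⟨cauchyMap a (ContinuousMap.IccExtend hr u), continuous_cauchyMap (map_continuous _)⟩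

theorem isFixedPt_cauchyMapC_iff {a : ℝ} {u : C(Icc 0 r, ℝ)} :
    IsFixedPt (cauchyMapC hr a) u ↔ EqOn (cauchyMap a (ContinuousMap.IccExtend hr u))
      (ContinuousMap.IccExtend hr u) (Icc 0 r) := by
  simp only [IsFixedPt, ContinuousMap.ext_iff, EqOn, Subtype.forall]
  refine forall₂_congr fun x hx => ?_
  rw [ContinuousMap.coe_IccExtend, IccExtend_of_mem hr u hx]
  rfl

theorem mapsTo_cauchyMapC {a R : ℝ} (ha : 0 ≤ a)
    (hN : 3 / 2 * ((1 + (R * r) ^ 2) * (3 / 2 * R * r ^ 2 + a) + (R * r) ^ 2 * R) ≤ R) :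
    MapsTo (cauchyMapC hr a) (Metric.closedBall 0 R) (Metric.closedBall 0 R) := fun u hu => by
  rw [mem_closedBall_zero_iff] at hu ⊢
  refine (ContinuousMap.norm_le _ ((norm_nonneg u).trans hu)).2 fun x => ?_
  exact (abs_cauchyMap_le ha (fun t => (abs_IccExtend_le hr u t).trans hu) x.2.1 x.2.2).trans hN

theorem lipschitzOnWith_cauchyMapC {a R : ℝ} {K : NNReal} (ha : 0 ≤ a)
    (hK : 5 / 4 * r ^ 2 * (3 / 2 + 3 * R ^ 2 + 2 * a * R + 9 / 2 * R ^ 2 * r ^ 2) ≤ K) :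
    LipschitzOnWith K (cauchyMapC hr a) (Metric.closedBall 0 R) := by
  refine LipschitzOnWith.of_dist_le_mul fun u hu v hv => ?_
  rw [mem_closedBall_zero_iff] at hu hv
  refine (ContinuousMap.dist_le (by positivity)).2 fun x => ?_
  refine (abs_cauchyMap_sub_le ha (map_continuous _) (map_continuous _)
    (fun t => (abs_IccExtend_le hr u t).trans hu) (fun t => (abs_IccExtend_le hr v t).trans hv)
    (abs_IccExtend_sub_le hr u v) x.2.1 x.2.2).trans ?_
  gcongr

end ContinuousFunctions

end ShiftedCauchy

theorem contraction_constant_le {a r R L : ℝ} (ha : 0 < a) (hR : 0 < R)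
    (h1 : 3 / 2 * a + 9 / 4 * r ^ 2 * R + 3 / 2 * a * r ^ 2 * R ^ 2
            + 3 / 2 * (r ^ 2 + 3 / 2 * r ^ 4) * R ^ 3 ≤ R)
    (h2 : r ^ 2 * (9 / 4 + 9 / 2 * R ^ 2 + 3 * a * R ^ 2 + 27 / 4 * R ^ 2 * r ^ 2) ≤ L) :
    5 / 4 * r ^ 2 * (3 / 2 + 3 * R ^ 2 + 2 * a * R + 9 / 2 * R ^ 2 * r ^ 2) ≤ L := by
  have haR : a ≤ 2 / 3 * R := by
    have : 0 ≤ 9 / 4 * r ^ 2 * R + 3 / 2 * a * r ^ 2 * R ^ 2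
        + 3 / 2 * (r ^ 2 + 3 / 2 * r ^ 4) * R ^ 3 := by positivity
    linarith
  -- `a ≤ 2R/3` lets the `2aR` term of our Lipschitz estimate be absorbed by the `3aR²` of `h2`.
  have key : 5 / 2 * (a * R) ≤ 3 / 8 + 3 / 4 * R ^ 2 + 3 * (a * R ^ 2) := by
    nlinarith [mul_nonneg ha.le (sq_nonneg (R - 5 / 12)), sq_nonneg (R - 25 / 108)]
  nlinarith [mul_nonneg (sq_nonneg r) (sq_nonneg (r * R)),
    mul_nonneg (sq_nonneg r) (sub_nonneg.2 key)]

open ShiftedCauchy in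
theorem shifted_CP_existence_uniqueness_C2_general (a r R L : ℝ)
    (ha : 0 < a) (hr : 0 < r) (hR : 0 < R)
    (h1 : 3 / 2 * a + 9 / 4 * r ^ 2 * R + 3 / 2 * a * r ^ 2 * R ^ 2
            + 3 / 2 * (r ^ 2 + 3 / 2 * r ^ 4) * R ^ 3 ≤ R)
    (h2 : r ^ 2 * (9 / 4 + 9 / 2 * R ^ 2 + 3 * a * R ^ 2 + 27 / 4 * R ^ 2 * r ^ 2) ≤ L)
    (hL1 : L < 1) :
    ∃ h : ℝ → ℝ,
      (ShiftedCP a r h ∧ ∀ x ∈ Icc (0:ℝ) r, |d2 r h x| ≤ R) ∧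
      ∀ h' : ℝ → ℝ, (ShiftedCP a r h' ∧ ∀ x ∈ Icc (0:ℝ) r, |d2 r h' x| ≤ R) →
        EqOn h' h (Icc 0 r) := by
  obtain ⟨u, ⟨hu, hfix⟩, huniq⟩ := existsUnique_isFixedPt_of_lipschitzOnWith
    (Real.toNNReal_lt_one.2 hL1) Metric.isClosed_closedBall ⟨0, Metric.mem_closedBall_self hR.le⟩
    (mapsTo_cauchyMapC hr.le ha.le (le_of_eq_of_le (by ring) h1))
    (lipschitzOnWith_cauchyMapC hr.le ha.le
      ((contraction_constant_le ha hR h1 h2).trans (Real.le_coe_toNNReal L)))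
  set w := ContinuousMap.IccExtend hr.le u
  refine ⟨prim (prim w), ⟨shiftedCP_prim_prim hr w.continuous
    ((isFixedPt_cauchyMapC_iff hr.le).1 hfix), fun x hx => ?_⟩, ?_⟩
  · rw [d2_prim_prim hr w.continuous hx]
    exact (abs_IccExtend_le hr.le u x).trans (mem_closedBall_zero_iff.1 hu)
  rintro f ⟨hf, hfR⟩
  set v : C(Icc 0 r, ℝ) := ⟨(Icc 0 r).domRestrict (d2 r f), (continuousOn_d2 hr hf.1).domRestrict⟩
  have hvf : EqOn (ContinuousMap.IccExtend hr.le v) (d2 r f) (Icc 0 r) := fun x hx =>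
    IccExtend_of_mem hr.le v hx
  have hv : v ∈ Metric.closedBall 0 R :=
    mem_closedBall_zero_iff.2 ((ContinuousMap.norm_le _ hR.le).2 fun x => hfR x x.2)
  obtain rfl := huniq v ⟨hv, (isFixedPt_cauchyMapC_iff hr.le).2
    (cauchyMap_eqOn_of_shiftedCP hr hf (map_continuous _) hvf)⟩
  exact (eqOn_prim_of_shiftedCP hr hf hvf).2.symm

/-- Under the smallness conditions on `a, r, R, L`, there exists a unique
`h ∈ C²₀([0,r])` with `‖h''‖_{C⁰([0,r])} ≤ R` solving the shifted Cauchy problem. -/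
theorem shifted_CP_existence_uniqueness_C2 (a r R L : ℝ)
    (ha : 0 < a) (hr : 0 < r) (hR : 0 < R) (hL : 0 < L)
    (h1 : 3 / 2 * a + 9 / 4 * r ^ 2 * R + 3 / 2 * a * r ^ 2 * R ^ 2
            + 3 / 2 * (r ^ 2 + 3 / 2 * r ^ 4) * R ^ 3 ≤ R)
    (h2 : r ^ 2 * (9 / 4 + 9 / 2 * R ^ 2 + 3 * a * R ^ 2 + 27 / 4 * R ^ 2 * r ^ 2) ≤ L)
    (hL1 : L < 1) :
    ∃ h : ℝ → ℝ,
      (ShiftedCP a r h ∧ ∀ x ∈ Icc (0:ℝ) r, |d2 r h x| ≤ R) ∧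
      ∀ h' : ℝ → ℝ, (ShiftedCP a r h' ∧ ∀ x ∈ Icc (0:ℝ) r, |d2 r h' x| ≤ R) →
        EqOn h' h (Icc 0 r) :=
  shifted_CP_existence_uniqueness_C2_general a r R L ha hr hR h1 h2 hL1
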